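/- Every NAP-colouring of a graph G is also a NAC-colouring of G. -/
import Mathlib

open scoped Classical

namespace NAC

variable {V : Type*}

/-- Number of edges of `G` in the list `l` whose colour under `c` is `b`. -/
noncomputable def cCount (G : SimpleGraph V) (c : G.edgeSet → Bool) (b : Bool)
    (l : List (Sym2 V)) : ℕ :=
  (l.filter fun e => decide (∃ h : e ∈ G.edgeSet, c ⟨e, h⟩ = b)).length

/-- `c` is a NAC-colouring of `G`: it is surjective (both colours are used) and no
cycle of `G` contains exactly one edge of either colour. -/
def IsNAC (G : SimpleGraph V) (c : G.edgeSet → Bool) : Prop :=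
  Function.Surjective c ∧
  ∀ ⦃u : V⦄ (w : G.Walk u u), w.IsCycle →
    cCount G c true w.edges ≠ 1 ∧ cCount G c false w.edges ≠ 1

/-- The number of NAC-colourings of `G`, divided by two. -/
noncomputable def nacNum (G : SimpleGraph V) : ℕ :=
  {c : G.edgeSet → Bool | IsNAC G c}.ncard / 2

end NAC

namespace NAC

/-- `c` is a NAP-colouring of `G`: it is surjective, every 3-cycle is monochromatic, and
there is no path `(u₁,u₂,u₃,u₄)` of length 3 whose consecutive edges alternate in colour. -/
def IsNAP (G : SimpleGraph V) (c : G.edgeSet → Bool) : Prop :=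
  Function.Surjective c ∧
  (∀ (u v w : V) (h1 : G.Adj u v) (h2 : G.Adj v w) (_ : G.Adj w u),
    c ⟨s(u, v), G.mem_edgeSet.mpr h1⟩ = c ⟨s(v, w), G.mem_edgeSet.mpr h2⟩) ∧
  (∀ (u1 u2 u3 u4 : V) (h1 : G.Adj u1 u2) (h2 : G.Adj u2 u3) (h3 : G.Adj u3 u4),
    u1 ≠ u3 → u2 ≠ u4 → u1 ≠ u4 →
    ¬(c ⟨s(u1, u2), G.mem_edgeSet.mpr h1⟩ ≠ c ⟨s(u2, u3), G.mem_edgeSet.mpr h2⟩ ∧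
      c ⟨s(u2, u3), G.mem_edgeSet.mpr h2⟩ ≠ c ⟨s(u3, u4), G.mem_edgeSet.mpr h3⟩))

end NAC

section Helpers

variable {V : Type*} {G : SimpleGraph V}

private lemma edges_getElem' {u v : V} (w : G.Walk u v) (i : ℕ)
    (hi : i < w.length) :
    w.edges[i]'(by simpa using hi) = s(w.getVert i, w.getVert (i + 1)) := by
  induction w generalizing i with
  | nil => simp at hi
  | cons h p ih =>
    cases i with
    | zero => simp [SimpleGraph.Walk.getVert_zero, SimpleGraph.Walk.getVert_cons_succ]
    | succ m =>
      simp only [SimpleGraph.Walk.edges_cons, List.getElem_cons_succ,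
        SimpleGraph.Walk.getVert_cons_succ]
      exact ih m (by simpa using hi)

private lemma getVert_support_getElem {u v : V} (w : G.Walk u v)
    (i : ℕ) (hi : i ≤ w.length) :
    w.getVert i = w.support[i]'(by simp [Nat.lt_succ_iff, hi]) := by
  induction w generalizing i with
  | nil =>
    obtain rfl : i = 0 := by simpa using hi
    simp
  | cons h p ih =>
    cases i with
    | zero => simp
    | succ m =>
      simp only [SimpleGraph.Walk.support_cons, SimpleGraph.Walk.getVert_cons_succ,
        List.getElem_cons_succ]
      exact ih m (by simpa using hi)

private lemma cycle_getVert_inj {u : V} {w : G.Walk u u}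
    (hw : w.IsCycle) {i j : ℕ} (hi : i < w.length) (hj : j < w.length) (hne : i ≠ j) :
    w.getVert i ≠ w.getVert j := by
  have hnd := hw.support_nodup
  have hlen : w.support.tail.length = w.length := by simp
  have key : ∀ m : ℕ, 1 ≤ m → (hm : m ≤ w.length) →
      w.getVert m = w.support.tail[m-1]'(by omega) := by
    intro m h1 hm
    rw [getVert_support_getElem w m hm, List.getElem_tail]
    congr 1
    omega
  set i' := if i = 0 then w.length else i with hi'
  set j' := if j = 0 then w.length else j with hj'
  have hgi : w.getVert i = w.getVert i' := by
    rw [hi']; split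
    · simp_all [SimpleGraph.Walk.getVert_zero, SimpleGraph.Walk.getVert_length]
    · rfl
  have hgj : w.getVert j = w.getVert j' := by
    rw [hj']; split
    · simp_all [SimpleGraph.Walk.getVert_zero, SimpleGraph.Walk.getVert_length]
    · rfl
  have h1i : 1 ≤ i' ∧ i' ≤ w.length := by rw [hi']; split <;> omega
  have h1j : 1 ≤ j' ∧ j' ≤ w.length := by rw [hj']; split <;> omega
  have hne' : i' - 1 ≠ j' - 1 := by rw [hi', hj']; split <;> split <;> omega
  rw [hgi, hgj, key i' h1i.1 h1i.2, key j' h1j.1 h1j.2]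
  intro hcon
  exact hne' ((hnd.getElem_inj_iff).mp hcon)

private lemma getVert_mod_succ {u : V} (w : G.Walk u u) (hn : 0 < w.length) (j : ℕ) :
    w.getVert ((j + 1) % w.length) = w.getVert (j % w.length + 1) := by
  have h1 : j % w.length < w.length := Nat.mod_lt _ hn
  have e : (j + 1) % w.length = (j % w.length + 1) % w.length :=
    ((Nat.mod_modEq j w.length).symm.add_right 1)
  rcases lt_or_eq_of_le (Nat.succ_le_of_lt h1) with h | h
  · rw [e, Nat.mod_eq_of_lt h]
  · have h' : j % w.length + 1 = w.length := h
    rw [e, h', Nat.mod_self, SimpleGraph.Walk.getVert_zero,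
      SimpleGraph.Walk.getVert_length]

private lemma adj_vv {u : V} (w : G.Walk u u) (hn : 0 < w.length) (j : ℕ) :
    G.Adj (w.getVert (j % w.length)) (w.getVert ((j + 1) % w.length)) := by
  rw [getVert_mod_succ w hn j]
  exact w.adj_getVert_succ (Nat.mod_lt _ hn)

end Helpers

open NAC in
/-- Every NAP-colouring is a NAC-colouring. -/
theorem statement5 {V : Type*} (G : SimpleGraph V) (c : G.edgeSet → Bool)
    (hc : IsNAP G c) : IsNAC G c := by
  obtain ⟨hsurj, htri, hpath⟩ := hc
  refine ⟨hsurj, fun u w hw => ?_⟩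
  suffices h : ∀ b : Bool, cCount G c b w.edges ≠ 1 from ⟨h true, h false⟩
  intro b hcount
  have hn3 := hw.three_le_length
  have hn : 0 < w.length := by omega
  have hne2 : ∀ x y : Bool, x ≠ y → x = !y := by decide
  -- extract the unique edge of colour `b`
  obtain ⟨e, he⟩ := List.length_eq_one_iff.mp hcount
  have hemem : e ∈ w.edges ∧ _ :=
    List.mem_filter.mp (he ▸ List.mem_singleton_self e)
  obtain ⟨i0, hi0lt, hi0e⟩ := List.mem_iff_getElem.mp hemem.1
  have hi0n : i0 < w.length := by simpa using hi0lt
  have hnod : w.edges.Nodup := hw.edges_nodup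
  -- the key characterisation of colours along the cycle
  have colP : ∀ j : ℕ,
      (c ⟨s(w.getVert (j % w.length), w.getVert ((j + 1) % w.length)),
        G.mem_edgeSet.mpr (adj_vv w hn j)⟩ = b) ↔ j % w.length = i0 := by
    intro j
    have hjn : j % w.length < w.length := Nat.mod_lt _ hn
    have hjn' : j % w.length < w.edges.length := by simpa using hjn
    have hedge : w.edges[j % w.length]'hjn' =
        s(w.getVert (j % w.length), w.getVert ((j + 1) % w.length)) := by
      rw [edges_getElem' w _ hjn, getVert_mod_succ w hn j]
    have hmemE : w.edges[j % w.length]'hjn' ∈ G.edgeSet :=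
      w.edges_subset_edgeSet (List.getElem_mem _)
    have hc' : c ⟨s(w.getVert (j % w.length), w.getVert ((j + 1) % w.length)),
        G.mem_edgeSet.mpr (adj_vv w hn j)⟩ = c ⟨w.edges[j % w.length]'hjn', hmemE⟩ := by
      congr 1
      exact Subtype.ext hedge.symm
    constructor
    · intro hb
      have hfil : w.edges[j % w.length]'hjn' ∈
          w.edges.filter (fun e => decide (∃ h : e ∈ G.edgeSet, c ⟨e, h⟩ = b)) :=
        List.mem_filter.mpr ⟨List.getElem_mem _,
          decide_eq_true ⟨hmemE, by rw [← hc']; exact hb⟩⟩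
      rw [he, List.mem_singleton] at hfil
      rw [← hi0e] at hfil
      exact hnod.getElem_inj_iff.mp hfil
    · intro hj
      rw [hc']
      obtain ⟨h', hbe⟩ := of_decide_eq_true hemem.2
      have hsub : (⟨w.edges[j % w.length]'hjn', hmemE⟩ : G.edgeSet) = ⟨e, h'⟩ := by
        apply Subtype.ext
        show w.edges[j % w.length]'hjn' = e
        rw [← hi0e]
        congr 1
      rw [hsub]
      exact hbe
  -- arithmetic helper
  have hmodne : ∀ a d : ℕ, 0 < d → d < w.length → a % w.length ≠ (a + d) % w.length := by
    intro a d hd1 hd2 hcon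
    have hdvd : w.length ∣ d := by
      have := (Nat.modEq_iff_dvd' (Nat.le_add_right a d)).mp hcon
      simpa using this
    have := Nat.le_of_dvd hd1 hdvd
    omega
  set k := i0 + w.length - 1 with hkdef
  have hk1 : (k + 1) % w.length = i0 := by
    have hke : k + 1 = i0 + w.length := by omega
    rw [hke, Nat.add_mod_right, Nat.mod_eq_of_lt hi0n]
  have colk1 : c ⟨s(w.getVert ((k + 1) % w.length), w.getVert ((k + 1 + 1) % w.length)),
      G.mem_edgeSet.mpr (adj_vv w hn (k + 1))⟩ = b := (colP (k + 1)).mpr hk1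
  have colk : c ⟨s(w.getVert (k % w.length), w.getVert ((k + 1) % w.length)),
      G.mem_edgeSet.mpr (adj_vv w hn k)⟩ = !b := by
    apply hne2
    intro hb
    have h1 := (colP k).mp hb
    rw [← hk1] at h1
    exact hmodne k 1 one_pos (by omega) h1
  have colk2 : c ⟨s(w.getVert ((k + 1 + 1) % w.length), w.getVert ((k + 1 + 1 + 1) % w.length)),
      G.mem_edgeSet.mpr (adj_vv w hn (k + 1 + 1))⟩ = !b := by
    apply hne2
    intro hb
    have h1 := (colP (k + 1 + 1)).mp hb
    rw [← hk1] at h1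
    exact (hmodne (k + 1) 1 one_pos (by omega) h1.symm)
  rcases Nat.lt_or_ge w.length 4 with h4 | h4
  · -- triangle case: w.length = 3
    have hl3 : w.length = 3 := by omega
    have hadj31 : G.Adj (w.getVert ((k + 1 + 1 + 1) % w.length))
        (w.getVert ((k + 1) % w.length)) := by
      have h := adj_vv w hn (k + 1 + 1 + 1)
      have e4 : (k + 1 + 1 + 1 + 1) % w.length = (k + 1) % w.length := by
        have : k + 1 + 1 + 1 + 1 = (k + 1) + 3 := by omega
        rw [this, hl3, Nat.add_mod_right]
      rwa [e4] at h
    have := htri _ _ _ (adj_vv w hn (k + 1)) (adj_vv w hn (k + 1 + 1)) hadj31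
    rw [colk1, colk2] at this
    simp at this
  · -- path case: w.length ≥ 4
    have hlt : ∀ j : ℕ, j % w.length < w.length := fun j => Nat.mod_lt _ hn
    have d13 : w.getVert (k % w.length) ≠ w.getVert ((k + 1 + 1) % w.length) :=
      cycle_getVert_inj hw (hlt k) (hlt (k + 1 + 1)) (hmodne k 2 (by omega) (by omega))
    have d24 : w.getVert ((k + 1) % w.length) ≠ w.getVert ((k + 1 + 1 + 1) % w.length) :=
      cycle_getVert_inj hw (hlt (k + 1)) (hlt (k + 1 + 1 + 1))
        (hmodne (k + 1) 2 (by omega) (by omega))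
    have d14 : w.getVert (k % w.length) ≠ w.getVert ((k + 1 + 1 + 1) % w.length) :=
      cycle_getVert_inj hw (hlt k) (hlt (k + 1 + 1 + 1)) (hmodne k 3 (by omega) (by omega))
    refine hpath _ _ _ _ (adj_vv w hn k) (adj_vv w hn (k + 1)) (adj_vv w hn (k + 1 + 1))
      d13 d24 d14 ⟨?_, ?_⟩
    · rw [colk, colk1]; simp
    · rw [colk1, colk2]; simp
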